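/- The doubling construction produces a Hamiltonian cycle system of order 4n+1: given three HCS(2n+1) H₁, H₂, H₃ on vertex set {∞} ∪ [2n] with cycles A_i = (∞, α_{i,1}, …, α_{i,2n}), B_i = (∞, β_{i,1}, …, β_{i,2n}), C_i = (∞, γ_{i,1}, …, γ_{i,2n}) for i ∈ [n], satisfying α_{i,1} = β_{i,1} = γ_{i,1} and α_{i,2n} = β_{i,2n} = γ_{i,2n} for all i, the collection T of 2n cycles T_{i,1} = (∞, a_{i,1}, …, a_{i,2n}, b'_{i,2n}, …, b'_{i,1}) and T_{i,2} = (∞, c_{i,2n}, c'_{i,2n-1}, c_{i,2n-2}, …, c'_{i,1}, c_{i,1}, c'_{i,2}, c_{i,3}, …, c'_{i,2n}) on vertex set {∞} ∪ ([2n] × {1,−1}) is a Hamiltonian cycle system of order 4n+1, where a_{i,j} = (α_{i,j}, 1), b_{i,j} = (β_{i,j}, 1), c_{i,j} = (γ_{i,j}, 1) and z' denotes (x, −y) for z = (x, y). -/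

import Mathlib

/-! The cycles `T_{i,1}`, `T_{i,2}` are traced by bijections `ZMod (4n+1) → {∞} ∪ [2n] × {±1}`,
hence Hamiltonian. Together they have `2n(4n+1) = (4n+1 choose 2)` edges, so it suffices that they
cover every edge of `K_{4n+1}`. An edge `(x,+)(y,+)` or `(x,-)(y,-)` comes from the edge `xy` of some
`A_i` or `B_i` and lies in `T_{i,1}`; an edge `(x,±)(y,∓)` with `x ≠ y` comes from some `C_i` and lies
in `T_{i,2}`. The edges at `∞` and the edges `(x,+)(x,-)` come from the edge `∞x` of some `A_i`, i.e.
from `x = α_{i,1}` or `x = α_{i,2n}`; since the three systems share these end vertices, both kinds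
of edges lie in `T_{i,1}` or `T_{i,2}`. -/

open Pointwise

variable {V : Type*}

/-- The action of a permutation on a simple graph by relabelling vertices. -/
instance permGraphAction : MulAction (Equiv.Perm V) (SimpleGraph V) where
  smul σ H := H.map σ.toEmbedding
  one_smul H := by
    show H.map (1 : Equiv.Perm V).toEmbedding = H
    ext a b
    simp [SimpleGraph.map_adj]
  mul_smul σ τ H := by
    ext a b
    show (H.map (σ * τ).toEmbedding).Adj a b ↔ ((H.map τ.toEmbedding).map σ.toEmbedding).Adj a b
    rw [SimpleGraph.map_adj, SimpleGraph.map_adj]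
    simp only [SimpleGraph.map_adj, Equiv.coe_toEmbedding, Equiv.Perm.coe_mul,
      Function.comp_apply]
    constructor
    · rintro ⟨u, v, h, rfl, rfl⟩
      exact ⟨τ u, τ v, (SimpleGraph.map_adj τ.toEmbedding H _ _).2 ⟨u, v, h, rfl, rfl⟩, rfl, rfl⟩
    · rintro ⟨x, y, hm, rfl, rfl⟩
      obtain ⟨u, v, h, rfl, rfl⟩ := (SimpleGraph.map_adj τ.toEmbedding H x y).1 hm
      exact ⟨u, v, h, rfl, rfl⟩

lemma perm_smul_graph (σ : Equiv.Perm V) (H : SimpleGraph V) :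
    σ • H = H.map σ.toEmbedding := rfl

/-- A Hamiltonian cycle of the complete graph on `V`: a connected, 2-regular
(spanning) subgraph. -/
def IsHamCycle [Fintype V] (H : SimpleGraph V) : Prop :=
  H.Connected ∧ ∀ v : V, (H.neighborSet v).ncard = 2

/-- A Hamiltonian cycle system: a set of Hamiltonian cycles whose edge sets
partition the edge set of the complete graph. -/
def IsHCS [Fintype V] (𝓗 : Set (SimpleGraph V)) : Prop :=
  (∀ H ∈ 𝓗, IsHamCycle H) ∧
    ∀ e ∈ (⊤ : SimpleGraph V).edgeSet, ∃! H, H ∈ 𝓗 ∧ e ∈ H.edgeSet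

/-- The full automorphism group of a Hamiltonian cycle system, as the subgroup
of vertex permutations preserving the set of cycles. -/
def autHCS (𝓗 : Set (SimpleGraph V)) : Subgroup (Equiv.Perm V) :=
  MulAction.stabilizer (Equiv.Perm V) 𝓗

/-- The cycle graph traced by a map from `ZMod m` (consecutive residues are adjacent). -/
def cycleOn {W : Type*} (m : ℕ) (f : ZMod m → W) : SimpleGraph W :=
  SimpleGraph.fromRel (fun a b => ∃ i : ZMod m, f i = a ∧ f (i + 1) = b)

/-- First-type cycle of the doubling construction, as a map `ZMod (4n+1) → {∞} ∪ ([2n]×{±1})`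
(`none` is `∞`, `true` is sign `+1`). -/
def doubleT1 (n : ℕ) (A B : ZMod (2*n+1) → Option (Fin (2*n)))
    (k : ZMod (4*n+1)) : Option (Fin (2*n) × Bool) :=
  if k.val = 0 then none
  else if k.val ≤ 2*n then (A ((k.val : ℕ) : ZMod (2*n+1))).map (fun x => (x, true))
  else (B (((4*n+1-k.val : ℕ)) : ZMod (2*n+1))).map (fun x => (x, false))

/-- Second-type cycle of the doubling construction. -/
def doubleT2 (n : ℕ) (C : ZMod (2*n+1) → Option (Fin (2*n)))
    (k : ZMod (4*n+1)) : Option (Fin (2*n) × Bool) :=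
  if k.val = 0 then none
  else if k.val ≤ 2*n then
    (C (((2*n+1-k.val : ℕ)) : ZMod (2*n+1))).map (fun x => (x, decide (k.val % 2 = 1)))
  else (C (((k.val - 2*n : ℕ)) : ZMod (2*n+1))).map (fun x => (x, decide ((k.val - 2*n) % 2 = 1)))

section CycleOn

variable {W : Type*} {m : ℕ} {f : ZMod m → W}

lemma cycleOn_adj_iff {a b : W} :
    (cycleOn m f).Adj a b ↔
      a ≠ b ∧ ∃ k, (f k = a ∧ f (k + 1) = b) ∨ (f k = b ∧ f (k + 1) = a) := by
  simp only [cycleOn, SimpleGraph.fromRel_adj, ← exists_or]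

lemma cycleOn_adj_of_eq (hm : 1 < m) (hf : f.Injective) {k : ZMod m} {a b : W}
    (ha : f k = a) (hb : f (k + 1) = b) : (cycleOn m f).Adj a b := by
  have : Fact (1 < m) := ⟨hm⟩
  subst ha hb
  exact cycleOn_adj_iff.2 ⟨hf.ne (by simp), k, .inl ⟨rfl, rfl⟩⟩

lemma cycleOn_neighborSet (hm : 1 < m) (hf : f.Injective) (k : ZMod m) :
    (cycleOn m f).neighborSet (f k) = {f (k + 1), f (k - 1)} := by
  ext b
  simp only [SimpleGraph.mem_neighborSet, Set.mem_insert_iff, Set.mem_singleton_iff]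
  constructor
  · rintro h
    obtain ⟨-, j, ⟨hj, rfl⟩ | ⟨rfl, hj⟩⟩ := cycleOn_adj_iff.1 h
    · exact .inl (by rw [hf hj])
    · exact .inr (by rw [← hf hj, add_sub_cancel_right])
  · rintro (rfl | rfl)
    · exact cycleOn_adj_of_eq hm hf rfl rfl
    · exact (cycleOn_adj_of_eq hm hf rfl (by rw [sub_add_cancel])).symm

lemma cycleOn_connected (hm : 1 < m) (hf : f.Bijective) : (cycleOn m f).Connected := by
  have : NeZero m := ⟨by omega⟩
  have reach : ∀ j : ℕ, (cycleOn m f).Reachable (f 0) (f j) := by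
    intro j
    induction j with
    | zero => simp
    | succ j ih => exact ih.trans (cycleOn_adj_of_eq hm hf.1 rfl (by push_cast; rfl)).reachable
  have : Nonempty W := ⟨f 0⟩
  refine ⟨fun u v => ?_⟩
  obtain ⟨k, rfl⟩ := hf.2 u
  obtain ⟨l, rfl⟩ := hf.2 v
  simpa using (reach k.val).symm.trans (reach l.val)

lemma isHamCycle_cycleOn [Fintype W] (hm : 3 ≤ m) (hf : f.Bijective) :
    IsHamCycle (cycleOn m f) := by
  refine ⟨cycleOn_connected (by omega) hf, fun v => ?_⟩
  obtain ⟨k, rfl⟩ := hf.2 v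
  rw [cycleOn_neighborSet (by omega) hf.1, Set.ncard_pair]
  intro h
  have h2 : ((2 : ℕ) : ZMod m) = 0 := by push_cast; linear_combination hf.1 h
  exact absurd (Nat.le_of_dvd two_pos ((ZMod.natCast_eq_zero_iff 2 m).1 h2)) (by omega)

lemma cycleOn_adj_apply_iff (hm : 1 < m) (hf : f.Injective) {k : ZMod m} {b : W} :
    (cycleOn m f).Adj (f k) b ↔ b = f (k + 1) ∨ b = f (k - 1) := by
  rw [← SimpleGraph.mem_neighborSet, cycleOn_neighborSet hm hf]
  rfl

end CycleOn

open Finset in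
lemma IsHamCycle.card_edgeFinset [Fintype V] {H : SimpleGraph V} [DecidableRel H.Adj]
    (hH : IsHamCycle H) : #H.edgeFinset = Fintype.card V := by
  have hdeg : ∀ v, H.degree v = 2 := fun v => by
    rw [← SimpleGraph.card_neighborSet_eq_degree, ← Nat.card_eq_fintype_card,
      Nat.card_coe_set_eq, hH.2 v]
  have := H.sum_degrees_eq_twice_card_edges
  simp only [hdeg, sum_const, card_univ, smul_eq_mul] at this
  omega

open Finset in
lemma isHCS_range_of_forall_exists_mem_edgeSet [Fintype V] {ι : Type*} [Fintype ι]
    {f : ι → SimpleGraph V} (hf : ∀ i, IsHamCycle (f i))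
    (hcover : ∀ e ∈ (⊤ : SimpleGraph V).edgeSet, ∃ i, e ∈ (f i).edgeSet)
    (hcard : Fintype.card ι * Fintype.card V = (Fintype.card V).choose 2) :
    IsHCS (Set.range f) := by
  classical
  refine ⟨Set.forall_mem_range.2 hf, fun e he => ?_⟩
  have hsum : ∑ e ∈ (⊤ : SimpleGraph V).edgeFinset, #{i | e ∈ (f i).edgeFinset} =
      ∑ _e ∈ (⊤ : SimpleGraph V).edgeFinset, 1 := by
    calc _ = ∑ i, #{e ∈ (⊤ : SimpleGraph V).edgeFinset | e ∈ (f i).edgeFinset} := by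
          simp only [card_filter]; exact sum_comm
      _ = ∑ _i : ι, Fintype.card V := by
          refine sum_congr rfl fun i _ => ?_
          rw [filter_mem_eq_inter, inter_eq_right.2 (SimpleGraph.edgeFinset_mono le_top),
            (hf i).card_edgeFinset]
      _ = _ := by
          rw [sum_const, card_univ, smul_eq_mul, hcard,
            ← SimpleGraph.card_edgeFinset_top_eq_card_choose_two, card_eq_sum_ones]
  have hle : ∀ e ∈ (⊤ : SimpleGraph V).edgeFinset, 1 ≤ #{i | e ∈ (f i).edgeFinset} := by
    intro e he
    obtain ⟨i, hi⟩ := hcover e (SimpleGraph.mem_edgeFinset.1 he)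
    exact card_pos.2 ⟨i, by simpa using hi⟩
  obtain ⟨i, hi⟩ := card_eq_one.1 <|
    ((sum_eq_sum_iff_of_le hle).1 hsum.symm e (SimpleGraph.mem_edgeFinset.2 he)).symm
  have mem_iff : ∀ j, e ∈ (f j).edgeSet ↔ j = i := fun j => by
    simpa using congrArg (j ∈ ·) hi
  refine ⟨f i, ⟨⟨i, rfl⟩, (mem_iff i).2 rfl⟩, ?_⟩
  rintro _ ⟨⟨j, rfl⟩, hj⟩
  rw [(mem_iff j).1 hj]

lemma IsHCS.exists_adj [Fintype V] {ι : Type*} {f : ι → SimpleGraph V}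
    (h : IsHCS (Set.range f)) {a b : V} (hab : a ≠ b) : ∃ i, (f i).Adj a b := by
  obtain ⟨_, ⟨⟨i, rfl⟩, hi⟩, -⟩ := h.2 s(a, b) hab
  exact ⟨i, hi⟩

lemma IsHCS.exists_apply_one_or_apply_neg_one {α ι : Type*} [Fintype α] {m : ℕ} (hm : 1 < m)
    {g : ι → ZMod m → Option α} (hg : ∀ i, (g i).Injective) (hg0 : ∀ i, g i 0 = none)
    (h : IsHCS (Set.range fun i => cycleOn m (g i))) (x : α) :
    ∃ i, g i 1 = some x ∨ g i (-1) = some x := by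
  obtain ⟨i, hi⟩ := h.exists_adj (a := none) (b := some x) (by simp)
  rw [← hg0 i, cycleOn_adj_apply_iff hm (hg i)] at hi
  exact ⟨i, by simpa [eq_comm] using hi⟩

lemma exists_natCast_eq_some {α : Type*} {m : ℕ} [NeZero m] {g : ZMod m → Option α}
    (hg : g.Surjective) (hg0 : g 0 = none) (x : α) :
    ∃ j : ℕ, 1 ≤ j ∧ j < m ∧ g j = some x := by
  obtain ⟨k, hk⟩ := hg (some x)
  have hk0 : k ≠ 0 := by rintro rfl; simp [hg0] at hk
  exact ⟨k.val, Nat.one_le_iff_ne_zero.2 ((ZMod.val_ne_zero k).2 hk0), k.val_lt, by simpa using hk⟩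

lemma exists_natCast_of_cycleOn_adj {α : Type*} {m : ℕ} [NeZero m] {g : ZMod m → Option α}
    (hg0 : g 0 = none) {x y : α} (h : (cycleOn m g).Adj (some x) (some y)) :
    ∃ j : ℕ, 1 ≤ j ∧ j + 1 < m ∧
      ((g j = some x ∧ g (j + 1 : ℕ) = some y) ∨ (g j = some y ∧ g (j + 1 : ℕ) = some x)) := by
  obtain ⟨-, k, hk⟩ := cycleOn_adj_iff.1 h
  have ne_zero : ∀ z a, g z = some a → z ≠ 0 := by rintro z a h rfl; simp [hg0] at h
  obtain ⟨hk0, hk1⟩ : k ≠ 0 ∧ k + 1 ≠ 0 := by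
    rcases hk with ⟨h1, h2⟩ | ⟨h1, h2⟩ <;> exact ⟨ne_zero _ _ h1, ne_zero _ _ h2⟩
  have hval : k.val + 1 ≠ m := fun h => hk1 <| by
    rw [← ZMod.natCast_zmod_val k, ← Nat.cast_add_one, h, ZMod.natCast_self]
  refine ⟨k.val, Nat.one_le_iff_ne_zero.2 ((ZMod.val_ne_zero k).2 hk0),
    lt_of_le_of_ne k.val_lt hval, ?_⟩
  simpa using hk

namespace Doubling

variable {n j : ℕ} {A B C : ZMod (2 * n + 1) → Option (Fin (2 * n))}

lemma doubleT1_zero : doubleT1 n A B 0 = none := by simp [doubleT1]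

lemma doubleT1_natCast (h1 : 1 ≤ j) (h2 : j ≤ 2 * n) :
    doubleT1 n A B j = (A j).map (·, true) := by
  have hval : ((j : ℕ) : ZMod (4 * n + 1)).val = j := ZMod.val_cast_of_lt (by omega)
  simp [doubleT1, hval, h2, Nat.one_le_iff_ne_zero.1 h1]

lemma doubleT1_neg_natCast (h1 : 1 ≤ j) (h2 : j ≤ 2 * n) :
    doubleT1 n A B (-j) = (B j).map (·, false) := by
  have hval : (-((j : ℕ) : ZMod (4 * n + 1))).val = 4 * n + 1 - j := by
    rw [ZMod.neg_val, if_neg, ZMod.val_cast_of_lt (by omega)]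
    rw [ZMod.natCast_eq_zero_iff]
    exact Nat.not_dvd_of_pos_of_lt (by omega) (by omega)
  simp only [doubleT1, hval, show 4 * n + 1 - (4 * n + 1 - j) = j by omega]
  rw [if_neg (by omega), if_neg (by omega)]

lemma doubleT2_zero : doubleT2 n C 0 = none := by simp [doubleT2]

lemma doubleT2_natCast_two_mul_add (h1 : 1 ≤ j) (h2 : j ≤ 2 * n) :
    doubleT2 n C (2 * n + j : ℕ) = (C j).map (·, decide (j % 2 = 1)) := by
  have hval : ((2 * n + j : ℕ) : ZMod (4 * n + 1)).val = 2 * n + j :=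
    ZMod.val_cast_of_lt (by omega)
  simp only [doubleT2, hval, Nat.add_sub_cancel_left]
  rw [if_neg (by omega), if_neg (by omega)]

lemma doubleT2_neg_natCast_two_mul_add (h1 : 1 ≤ j) (h2 : j ≤ 2 * n) :
    doubleT2 n C (-(2 * n + j : ℕ)) = (C j).map (·, !decide (j % 2 = 1)) := by
  have hval : (-((2 * n + j : ℕ) : ZMod (4 * n + 1))).val = 2 * n + 1 - j := by
    rw [ZMod.neg_val, if_neg, ZMod.val_cast_of_lt (by omega)]
    · omega
    · rw [ZMod.natCast_eq_zero_iff]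
      exact Nat.not_dvd_of_pos_of_lt (by omega) (by omega)
  simp only [doubleT2, hval, show 2 * n + 1 - (2 * n + 1 - j) = j by omega]
  rw [if_neg (by omega), if_pos (by omega)]
  have : (2 * n + 1 - j) % 2 = 1 ↔ ¬ j % 2 = 1 := by omega
  simp only [this, decide_not]

lemma doubleT1_bijective (hA : A.Surjective) (hB : B.Surjective) (hA0 : A 0 = none)
    (hB0 : B 0 = none) : (doubleT1 n A B).Bijective := by
  rw [Fintype.bijective_iff_surjective_and_card]
  refine ⟨?_, by simp; ring⟩
  rintro (_ | ⟨x, _ | _⟩)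
  · exact ⟨0, doubleT1_zero⟩
  · obtain ⟨j, h1, h2, hj⟩ := exists_natCast_eq_some hB hB0 x
    exact ⟨-j, by rw [doubleT1_neg_natCast h1 (by omega), hj]; rfl⟩
  · obtain ⟨j, h1, h2, hj⟩ := exists_natCast_eq_some hA hA0 x
    exact ⟨j, by rw [doubleT1_natCast h1 (by omega), hj]; rfl⟩

lemma doubleT2_bijective (hC : C.Surjective) (hC0 : C 0 = none) :
    (doubleT2 n C).Bijective := by
  rw [Fintype.bijective_iff_surjective_and_card]
  refine ⟨?_, by simp; ring⟩
  rintro (_ | ⟨x, s⟩)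
  · exact ⟨0, doubleT2_zero⟩
  obtain ⟨j, h1, h2, hj⟩ := exists_natCast_eq_some hC hC0 x
  by_cases hs : decide (j % 2 = 1) = s
  · exact ⟨(2 * n + j : ℕ), by rw [doubleT2_natCast_two_mul_add h1 (by omega), hj, hs]; rfl⟩
  · refine ⟨-(2 * n + j : ℕ), ?_⟩
    rw [doubleT2_neg_natCast_two_mul_add h1 (by omega), hj]
    cases s <;> simp_all

lemma natCast_two_mul_eq_neg_one : ((2 * n : ℕ) : ZMod (2 * n + 1)) = -1 := by
  rw [eq_neg_iff_add_eq_zero]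
  exact_mod_cast ZMod.natCast_self (2 * n + 1)

lemma four_mul_natCast_add_one : (4 * n + 1 : ZMod (4 * n + 1)) = 0 := by
  exact_mod_cast ZMod.natCast_self (4 * n + 1)

variable {x y : Fin (2 * n)}

lemma adj_doubleT1_left (hT : (doubleT1 n A B).Injective) (hA0 : A 0 = none)
    (h : (cycleOn (2 * n + 1) A).Adj (some x) (some y)) :
    (cycleOn (4 * n + 1) (doubleT1 n A B)).Adj (some (x, true)) (some (y, true)) := by
  have := x.pos
  have step : ∀ {j : ℕ} {a b}, 1 ≤ j → j + 1 < 2 * n + 1 → A j = some a →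
      A (j + 1 : ℕ) = some b →
      (cycleOn (4 * n + 1) (doubleT1 n A B)).Adj (some (a, true)) (some (b, true)) := by
    intro j a b h1 h2 ha hb
    refine cycleOn_adj_of_eq (by omega) hT (k := j) ?_ ?_
    · rw [doubleT1_natCast h1 (by omega), ha]; rfl
    · rw [← Nat.cast_add_one, doubleT1_natCast (by omega) (by omega), hb]; rfl
  obtain ⟨j, h1, h2, ⟨ha, hb⟩ | ⟨hb, ha⟩⟩ := exists_natCast_of_cycleOn_adj hA0 h
  · exact step h1 h2 ha hb
  · exact (step h1 h2 hb ha).symm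

lemma adj_doubleT1_right (hT : (doubleT1 n A B).Injective) (hB0 : B 0 = none)
    (h : (cycleOn (2 * n + 1) B).Adj (some x) (some y)) :
    (cycleOn (4 * n + 1) (doubleT1 n A B)).Adj (some (x, false)) (some (y, false)) := by
  have := x.pos
  have step : ∀ {j : ℕ} {a b}, 1 ≤ j → j + 1 < 2 * n + 1 → B j = some a →
      B (j + 1 : ℕ) = some b →
      (cycleOn (4 * n + 1) (doubleT1 n A B)).Adj (some (b, false)) (some (a, false)) := by
    intro j a b h1 h2 ha hb
    refine cycleOn_adj_of_eq (by omega) hT (k := -(j + 1 : ℕ)) ?_ ?_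
    · rw [doubleT1_neg_natCast (by omega) (by omega), hb]; rfl
    · rw [show -((j + 1 : ℕ) : ZMod (4 * n + 1)) + 1 = -j by push_cast; ring,
        doubleT1_neg_natCast h1 (by omega), ha]; rfl
  obtain ⟨j, h1, h2, ⟨ha, hb⟩ | ⟨hb, ha⟩⟩ := exists_natCast_of_cycleOn_adj hB0 h
  · exact (step h1 h2 ha hb).symm
  · exact step h1 h2 hb ha

lemma adj_doubleT1_none (hT : (doubleT1 n A B).Injective) (hA1 : A 1 = some x)
    (hB1 : B 1 = some x) (s : Bool) :
    (cycleOn (4 * n + 1) (doubleT1 n A B)).Adj none (some (x, s)) := by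
  have := x.pos
  cases s
  · refine (cycleOn_adj_of_eq (by omega) hT (k := -1) ?_ ?_).symm
    · simpa [hB1] using doubleT1_neg_natCast (A := A) (B := B) (j := 1) le_rfl (by omega)
    · rw [neg_add_cancel, doubleT1_zero]
  · refine cycleOn_adj_of_eq (by omega) hT (k := 0) doubleT1_zero ?_
    simpa [hA1] using doubleT1_natCast (A := A) (B := B) (j := 1) le_rfl (by omega)

lemma adj_doubleT1_vertical (hT : (doubleT1 n A B).Injective)
    (hA : A (2 * n : ℕ) = some x) (hB : B (2 * n : ℕ) = some x) :
    (cycleOn (4 * n + 1) (doubleT1 n A B)).Adj (some (x, true)) (some (x, false)) := by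
  have := x.pos
  refine cycleOn_adj_of_eq (by omega) hT (k := (2 * n : ℕ)) ?_ ?_
  · rw [doubleT1_natCast (by omega) le_rfl, hA]; rfl
  · rw [show ((2 * n : ℕ) : ZMod (4 * n + 1)) + 1 = -(2 * n : ℕ) by
      push_cast; linear_combination (four_mul_natCast_add_one (n := n))]
    rw [doubleT1_neg_natCast (by omega) le_rfl, hB]; rfl

lemma adj_doubleT2_of_ne (hT : (doubleT2 n C).Injective) (hC0 : C 0 = none)
    (h : (cycleOn (2 * n + 1) C).Adj (some x) (some y)) {s t : Bool} (hst : s ≠ t) :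
    (cycleOn (4 * n + 1) (doubleT2 n C)).Adj (some (x, s)) (some (y, t)) := by
  have := x.pos
  -- the two halves of `doubleT2` traverse the `C`-path with opposite sign patterns
  have step : ∀ {j : ℕ} {a b}, 1 ≤ j → j + 1 < 2 * n + 1 → C j = some a →
      C (j + 1 : ℕ) = some b → ∀ s : Bool,
      (cycleOn (4 * n + 1) (doubleT2 n C)).Adj (some (a, s)) (some (b, !s)) := by
    intro j a b h1 h2 ha hb s
    have hpar : decide ((j + 1) % 2 = 1) = !decide (j % 2 = 1) := by
      rcases Nat.mod_two_eq_zero_or_one j with h | h <;> simp [h, Nat.add_mod]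
    by_cases hs : decide (j % 2 = 1) = s
    · refine cycleOn_adj_of_eq (by omega) hT (k := (2 * n + j : ℕ)) ?_ ?_
      · rw [doubleT2_natCast_two_mul_add h1 (by omega), ha, hs]; rfl
      · rw [show ((2 * n + j : ℕ) : ZMod (4 * n + 1)) + 1 = (2 * n + (j + 1) : ℕ) by
          push_cast; ring, doubleT2_natCast_two_mul_add (by omega) (by omega), hb, hpar, hs]
        rfl
    · refine (cycleOn_adj_of_eq (by omega) hT (k := -(2 * n + (j + 1) : ℕ)) ?_ ?_).symm
      · rw [doubleT2_neg_natCast_two_mul_add (by omega) (by omega), hb, hpar,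
          Bool.not_not, Bool.eq_not_of_ne hs]
        rfl
      · rw [show -((2 * n + (j + 1) : ℕ) : ZMod (4 * n + 1)) + 1 = -(2 * n + j : ℕ) by
          push_cast; ring, doubleT2_neg_natCast_two_mul_add h1 (by omega), ha,
          Bool.eq_not_of_ne hs, Bool.not_not]
        rfl
  obtain ⟨j, h1, h2, ⟨ha, hb⟩ | ⟨hb, ha⟩⟩ := exists_natCast_of_cycleOn_adj hC0 h
  · simpa [Bool.eq_not_of_ne hst.symm] using step h1 h2 ha hb s
  · simpa [Bool.eq_not_of_ne hst] using (step h1 h2 hb ha t).symm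

lemma adj_doubleT2_none (hT : (doubleT2 n C).Injective) (hC : C (2 * n : ℕ) = some x)
    (s : Bool) : (cycleOn (4 * n + 1) (doubleT2 n C)).Adj none (some (x, s)) := by
  have := x.pos
  cases s
  · refine (cycleOn_adj_of_eq (by omega) hT (k := (2 * n + 2 * n : ℕ)) ?_ ?_).symm
    · rw [doubleT2_natCast_two_mul_add (by omega) le_rfl, hC]; simp
    · rw [show ((2 * n + 2 * n : ℕ) : ZMod (4 * n + 1)) + 1 = 0 by
        push_cast; linear_combination (four_mul_natCast_add_one (n := n)), doubleT2_zero]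
  · refine cycleOn_adj_of_eq (by omega) hT (k := 0) doubleT2_zero ?_
    rw [show (0 : ZMod (4 * n + 1)) + 1 = -(2 * n + 2 * n : ℕ) by
      push_cast; linear_combination (four_mul_natCast_add_one (n := n)),
      doubleT2_neg_natCast_two_mul_add (by omega) le_rfl, hC]
    simp

lemma adj_doubleT2_vertical (hT : (doubleT2 n C).Injective) (hC : C 1 = some x) :
    (cycleOn (4 * n + 1) (doubleT2 n C)).Adj (some (x, true)) (some (x, false)) := by
  have := x.pos
  refine (cycleOn_adj_of_eq (by omega) hT (k := -(2 * n + 1 : ℕ)) ?_ ?_).symm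
  · simpa [hC] using doubleT2_neg_natCast_two_mul_add (C := C) (j := 1) le_rfl (by omega)
  · rw [show -((2 * n + 1 : ℕ) : ZMod (4 * n + 1)) + 1 = (2 * n + 1 : ℕ) by
      push_cast; linear_combination -(four_mul_natCast_add_one (n := n))]
    simpa [hC] using doubleT2_natCast_two_mul_add (C := C) (j := 1) le_rfl (by omega)

end Doubling

def doubling (n : ℕ) (A B C : Fin n → ZMod (2 * n + 1) → Option (Fin (2 * n))) :
    Fin n ⊕ Fin n → SimpleGraph (Option (Fin (2 * n) × Bool)) :=
  Sum.elim (fun i => cycleOn (4 * n + 1) (doubleT1 n (A i) (B i)))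
    (fun i => cycleOn (4 * n + 1) (doubleT2 n (C i)))

section DoublingSystem

open Doubling

variable {n : ℕ} {A B C : Fin n → ZMod (2 * n + 1) → Option (Fin (2 * n))}

lemma isHamCycle_doubling (hA : ∀ i, (A i).Surjective) (hB : ∀ i, (B i).Surjective)
    (hC : ∀ i, (C i).Surjective) (hA0 : ∀ i, A i 0 = none) (hB0 : ∀ i, B i 0 = none)
    (hC0 : ∀ i, C i 0 = none) (i : Fin n ⊕ Fin n) : IsHamCycle (doubling n A B C i) := by
  rcases i with i | i <;> have := i.pos
  · exact isHamCycle_cycleOn (by omega) (doubleT1_bijective (hA i) (hB i) (hA0 i) (hB0 i))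
  · exact isHamCycle_cycleOn (by omega) (doubleT2_bijective (hC i) (hC0 i))

lemma exists_mem_edgeSet_doubling
    (hAbij : ∀ i, (A i).Bijective) (hBbij : ∀ i, (B i).Bijective)
    (hCbij : ∀ i, (C i).Bijective)
    (hA0 : ∀ i, A i 0 = none) (hB0 : ∀ i, B i 0 = none) (hC0 : ∀ i, C i 0 = none)
    (hHA : IsHCS (Set.range fun i => cycleOn (2 * n + 1) (A i)))
    (hHB : IsHCS (Set.range fun i => cycleOn (2 * n + 1) (B i)))
    (hHC : IsHCS (Set.range fun i => cycleOn (2 * n + 1) (C i)))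
    (hfirst : ∀ i, A i 1 = B i 1 ∧ B i 1 = C i 1)
    (hlast : ∀ i, A i (2 * n : ℕ) = B i (2 * n : ℕ) ∧ B i (2 * n : ℕ) = C i (2 * n : ℕ)) :
    ∀ e ∈ (⊤ : SimpleGraph (Option (Fin (2 * n) × Bool))).edgeSet,
      ∃ i, e ∈ (doubling n A B C i).edgeSet := by
  have hT1 i := (doubleT1_bijective (hAbij i).2 (hBbij i).2 (hA0 i) (hB0 i)).1
  have hT2 i := (doubleT2_bijective (hCbij i).2 (hC0 i)).1
  have hend (x : Fin (2 * n)) : ∃ i, A i 1 = some x ∨ A i (2 * n : ℕ) = some x := by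
    rw [natCast_two_mul_eq_neg_one]
    exact hHA.exists_apply_one_or_apply_neg_one (by have := x.pos; omega) (hAbij · |>.1) hA0 x
  have hnone (x : Fin (2 * n)) (s : Bool) :
      ∃ i, s(none, some (x, s)) ∈ (doubling n A B C i).edgeSet := by
    obtain ⟨i, h | h⟩ := hend x
    · exact ⟨.inl i, adj_doubleT1_none (hT1 i) h ((hfirst i).1 ▸ h) s⟩
    · exact ⟨.inr i, adj_doubleT2_none (hT2 i) ((hlast i).1.trans (hlast i).2 ▸ h) s⟩
  have hvertical (x : Fin (2 * n)) :
      ∃ i, s(some (x, true), some (x, false)) ∈ (doubling n A B C i).edgeSet := by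
    obtain ⟨i, h | h⟩ := hend x
    · exact ⟨.inr i, adj_doubleT2_vertical (hT2 i) ((hfirst i).1.trans (hfirst i).2 ▸ h)⟩
    · exact ⟨.inl i, adj_doubleT1_vertical (hT1 i) h ((hlast i).1 ▸ h)⟩
  refine Sym2.ind fun w w' hne => ?_
  rcases w with _ | ⟨x, s⟩ <;> rcases w' with _ | ⟨y, t⟩
  · exact absurd rfl hne
  · exact hnone y t
  · exact Sym2.eq_swap ▸ hnone x s
  rcases eq_or_ne x y with rfl | hxy
  · cases s <;> cases t
    exacts [absurd rfl hne, Sym2.eq_swap ▸ hvertical x, hvertical x, absurd rfl hne]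
  have hxy' : (some x : Option (Fin (2 * n))) ≠ some y := by simpa
  by_cases hst : s = t
  · subst hst
    cases s
    · obtain ⟨i, hi⟩ := hHB.exists_adj hxy'
      exact ⟨.inl i, adj_doubleT1_right (hT1 i) (hB0 i) hi⟩
    · obtain ⟨i, hi⟩ := hHA.exists_adj hxy'
      exact ⟨.inl i, adj_doubleT1_left (hT1 i) (hA0 i) hi⟩
  · obtain ⟨i, hi⟩ := hHC.exists_adj hxy'
    exact ⟨.inr i, adj_doubleT2_of_ne (hT2 i) (hC0 i) hi hst⟩

end DoublingSystem

theorem doubling_construction_general (n : ℕ)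
    (A B C : Fin n → ZMod (2*n+1) → Option (Fin (2*n)))
    (hAbij : ∀ i, Function.Bijective (A i))
    (hBbij : ∀ i, Function.Bijective (B i))
    (hCbij : ∀ i, Function.Bijective (C i))
    (hA0 : ∀ i, A i 0 = none) (hB0 : ∀ i, B i 0 = none) (hC0 : ∀ i, C i 0 = none)
    (hHA : IsHCS (Set.range fun i => cycleOn (2*n+1) (A i)))
    (hHB : IsHCS (Set.range fun i => cycleOn (2*n+1) (B i)))
    (hHC : IsHCS (Set.range fun i => cycleOn (2*n+1) (C i)))
    (hfirst : ∀ i, A i 1 = B i 1 ∧ B i 1 = C i 1)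
    (hlast : ∀ i, A i ((2*n : ℕ) : ZMod (2*n+1)) = B i ((2*n : ℕ) : ZMod (2*n+1)) ∧
      B i ((2*n : ℕ) : ZMod (2*n+1)) = C i ((2*n : ℕ) : ZMod (2*n+1))) :
    IsHCS ((Set.range fun i : Fin n => cycleOn (4*n+1) (doubleT1 n (A i) (B i))) ∪
      (Set.range fun i : Fin n => cycleOn (4*n+1) (doubleT2 n (C i)))) := by
  rw [← Set.Sum.elim_range]
  refine isHCS_range_of_forall_exists_mem_edgeSet (f := doubling n A B C)
    (isHamCycle_doubling (hAbij · |>.2) (hBbij · |>.2) (hCbij · |>.2) hA0 hB0 hC0)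
    (exists_mem_edgeSet_doubling hAbij hBbij hCbij hA0 hB0 hC0 hHA hHB hHC hfirst hlast) ?_
  simp only [Fintype.card_sum, Fintype.card_fin, Fintype.card_option, Fintype.card_prod,
    Fintype.card_bool, Nat.choose_two_right, Nat.add_sub_cancel]
  exact (Nat.div_eq_of_eq_mul_left two_pos (by ring)).symm

/-- the doubling construction yields an HCS of order `4n+1`. -/
theorem doubling_construction (n : ℕ) (hn : 1 ≤ n)
    (A B C : Fin n → ZMod (2*n+1) → Option (Fin (2*n)))
    (hAbij : ∀ i, Function.Bijective (A i))
    (hBbij : ∀ i, Function.Bijective (B i))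
    (hCbij : ∀ i, Function.Bijective (C i))
    (hA0 : ∀ i, A i 0 = none) (hB0 : ∀ i, B i 0 = none) (hC0 : ∀ i, C i 0 = none)
    (hHA : IsHCS (Set.range fun i => cycleOn (2*n+1) (A i)))
    (hHB : IsHCS (Set.range fun i => cycleOn (2*n+1) (B i)))
    (hHC : IsHCS (Set.range fun i => cycleOn (2*n+1) (C i)))
    (hfirst : ∀ i, A i 1 = B i 1 ∧ B i 1 = C i 1)
    (hlast : ∀ i, A i ((2*n : ℕ) : ZMod (2*n+1)) = B i ((2*n : ℕ) : ZMod (2*n+1)) ∧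
      B i ((2*n : ℕ) : ZMod (2*n+1)) = C i ((2*n : ℕ) : ZMod (2*n+1))) :
    IsHCS ((Set.range fun i : Fin n => cycleOn (4*n+1) (doubleT1 n (A i) (B i))) ∪
      (Set.range fun i : Fin n => cycleOn (4*n+1) (doubleT2 n (C i)))) :=
  doubling_construction_general n A B C hAbij hBbij hCbij hA0 hB0 hC0 hHA hHB hHC hfirst hlast
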